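/- arXiv:2205.10811 — 3 statements merged into one kernel-verified Lean document; each statement's English description precedes it below -/
import Mathlib

section
/- Let p = p(n) with p/n → y ∈ (0,∞) and let k ≥ 1. For b ≥ 1 let Q_{k,4}^b be the number of quadruples (π_1, π_2, π_3, π_4) of circuits of length 2k that are jointly matched (every value attained by the entry-indices e_{π_m}(i), 1 ≤ m ≤ 4, 1 ≤ i ≤ 2k, is attained at least twice across the four circuits), cross-matched (each π_m has some position whose entry-index value also occurs in π_{m'} for some m' ≠ m), and have exactly b distinct entry-index values in total. Then there is a constant C, depending only on k and the sequence p(n), such that Q_{k,4}^b ≤ C·n^{b+2} for all n and all 1 ≤ b ≤ 4k. -/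
open MeasureTheory Filter Finset ProbabilityTheory Matrix
open scoped ENNReal NNReal Topology

namespace RMT

/-! ### Combinatorial notions: circuits, words (set partitions) -/

/-- A circuit of length `2k`: a map `π : {0,…,2k} → ℤ` (extended by `0` elsewhere) with
`π 0 = π (2k)`, even positions in `{1,…,p}` and odd positions in `{1,…,n}`. -/
def IsCircuit (p n k : ℕ) (π : ℕ → ℤ) : Prop :=
  π 0 = π (2 * k) ∧
    (∀ i, i ≤ k → 1 ≤ π (2 * i) ∧ π (2 * i) ≤ (p : ℤ)) ∧
    (∀ i, 1 ≤ i → i ≤ k → 1 ≤ π (2 * i - 1) ∧ π (2 * i - 1) ≤ (n : ℤ)) ∧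
    (∀ i, 2 * k < i → π i = 0)

/-- The entry index of a circuit at position `i`:
`(π (i-1), π i)` if `i` is odd, `(π i, π (i-1))` if `i` is even. -/
def entryIdx (π : ℕ → ℤ) (i : ℕ) : ℤ × ℤ :=
  if Odd i then (π (i - 1), π i) else (π i, π (i - 1))

/-- The edge value of a circuit at position `i` for a link function `L`:
`ξ_π(2i−1) = L (π (2i−2)) (π (2i−1))` and `ξ_π(2i) = L (π (2i)) (π (2i−1))`. -/
def xiIdx (L : ℤ → ℤ → ℤ) (π : ℕ → ℤ) (i : ℕ) : ℤ :=
  if Odd i then L (π (i - 1)) (π i) else L (π i) (π (i - 1))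

/-- `i` and `j` lie in the same block of the set partition `ω`. -/
def sameBlock {s : Finset ℕ} (ω : Finpartition s) (i j : ℕ) : Prop :=
  ∃ B ∈ ω.parts, i ∈ B ∧ j ∈ B

/-- The class `Π_S(ω)` of circuits whose entry-index match structure is exactly `ω`. -/
def PiS (p n k : ℕ) (ω : Finpartition (Finset.Icc 1 (2 * k))) : Set (ℕ → ℤ) :=
  {π | IsCircuit p n k π ∧
    ∀ i ∈ Finset.Icc 1 (2 * k), ∀ j ∈ Finset.Icc 1 (2 * k),
      (sameBlock ω i j ↔ entryIdx π i = entryIdx π j)}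

/-- The class `Π(ω)` of circuits, for a general link function `L`. -/
def PiL (L : ℤ → ℤ → ℤ) (p n k : ℕ) (ω : Finpartition (Finset.Icc 1 (2 * k))) : Set (ℕ → ℤ) :=
  {π | IsCircuit p n k π ∧
    ∀ i ∈ Finset.Icc 1 (2 * k), ∀ j ∈ Finset.Icc 1 (2 * k),
      (sameBlock ω i j ↔ xiIdx L π i = xiIdx L π j)}

/-- `r(ω)`: the number of blocks of `ω` whose minimum element is even. -/
def rIdx {s : Finset ℕ} (ω : Finpartition s) : ℕ :=
  (ω.parts.filter fun B => Even (WithBot.unbotD 1 B.min)).card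

/-- A partition is even if every block has even cardinality. -/
def EvenPartition {s : Finset ℕ} (ω : Finpartition s) : Prop :=
  ∀ B ∈ ω.parts, Even B.card

/-- A partition is symmetric if every block has equally many odd and even elements. -/
def SymmetricPartition {s : Finset ℕ} (ω : Finpartition s) : Prop :=
  ∀ B ∈ ω.parts, (B.filter fun x => Odd x).card = (B.filter fun x => Even x).card

/-- A pair partition: every block has exactly two elements. -/
def PairPartition {s : Finset ℕ} (ω : Finpartition s) : Prop :=
  ∀ B ∈ ω.parts, B.card = 2

/-- Non-crossing partition. -/
def NonCrossing {s : Finset ℕ} (ω : Finpartition s) : Prop :=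
  ¬ ∃ B ∈ ω.parts, ∃ B' ∈ ω.parts, B ≠ B' ∧
      ∃ a ∈ B, ∃ c ∈ B, ∃ b ∈ B', ∃ d ∈ B', a < b ∧ b < c ∧ c < d

/-- Special symmetric partition: every block has even size, and between any two
successive elements of a block, every other block has an even number of elements,
equally many of them at odd and even positions. -/
def SpecialSymmetric {s : Finset ℕ} (ω : Finpartition s) : Prop :=
  (∀ B ∈ ω.parts, Even B.card) ∧
    ∀ B ∈ ω.parts, ∀ i ∈ B, ∀ j ∈ B, i < j → (∀ x ∈ B, ¬(i < x ∧ x < j)) →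
      ∀ B' ∈ ω.parts, B' ≠ B →
        Even (B' ∩ Finset.Ioo i j).card ∧
          ((B' ∩ Finset.Ioo i j).filter fun x => Odd x).card =
            ((B' ∩ Finset.Ioo i j).filter fun x => Even x).card

/-! ### Spectral notions -/

/-- The empirical spectral distribution of the covariance matrix `A * Aᴴ` of a real
`p × n` matrix `A`: the uniform probability measure on its eigenvalues. -/
noncomputable def esdCov {p n : ℕ} (A : Matrix (Fin p) (Fin n) ℝ) : Measure ℝ :=
  (p : ℝ≥0∞)⁻¹ • ∑ i : Fin p,
    Measure.dirac ((Matrix.isHermitian_mul_conjTranspose_self A).eigenvalues i)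

/-- Weak convergence of a sequence of measures on `ℝ` to `μ`. -/
def WeakLim (μs : ℕ → Measure ℝ) (μ : Measure ℝ) : Prop :=
  ∀ f : BoundedContinuousFunction ℝ ℝ,
    Tendsto (fun n => ∫ v, f v ∂(μs n)) atTop (𝓝 (∫ v, f v ∂μ))

/-- Expected empirical spectral distribution of the random covariance matrix `A·Aᵀ`. -/
noncomputable def eesd {Ω : Type*} [MeasurableSpace Ω] (P : Measure Ω) {p n : ℕ}
    (A : Ω → Matrix (Fin p) (Fin n) ℝ) : Measure ℝ :=
  P.bind fun ω => esdCov (A ω)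

/-- Truncation at level `t`: `v·1[|v| ≤ t]`. -/
noncomputable def trunc (t : ℝ≥0∞) (v : ℝ) : ℝ :=
  if ENNReal.ofReal |v| ≤ t then v else 0

/-- The above-threshold part: `v·1[|v| > t]`. -/
noncomputable def truncAbove (t : ℝ≥0∞) (v : ℝ) : ℝ :=
  if ENNReal.ofReal |v| ≤ t then 0 else v

/-- The Lévy distance between two "distribution functions". -/
noncomputable def levyDist (F G : ℝ → ℝ) : ℝ :=
  sInf {ε : ℝ | 0 < ε ∧ ∀ x : ℝ, F (x - ε) - ε ≤ G x ∧ G x ≤ F (x + ε) + ε}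

/-- The cumulative distribution function of a measure on `ℝ`. -/
noncomputable def cdf (μ : Measure ℝ) : ℝ → ℝ := fun v => (μ (Set.Iic v)).toReal

/-! ### Assumption A -/

/-- `M_{2k} = sup_{[0,1]²} |g_{2k}|`, `M_{odd} = 0`, for a two-variable kernel family. -/
noncomputable def Msup2 (glim : ℕ → ℝ → ℝ → ℝ) (j : ℕ) : ℝ :=
  if Even j then
    sSup ((fun z : ℝ × ℝ => |glim (j / 2) z.1 z.2|) '' (Set.Icc (0 : ℝ) 1 ×ˢ Set.Icc (0 : ℝ) 1))
  else 0

/-- `α_m = Σ_{σ ∈ P(m)} ∏_{V ∈ σ} M_{|V|}` (sum over all set partitions of `{1,…,m}`). -/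
noncomputable def alphaP (M : ℕ → ℝ) (m : ℕ) : ℝ :=
  ∑ σ : Finpartition (Finset.Icc 1 m), ∏ B ∈ σ.parts, M B.card

/-- Carleman's condition `Σ_{k ≥ 1} α_{2k}^{-1/(2k)} = ∞`, where `α_k = alphaP M (2k)`. -/
def Carleman (M : ℕ → ℝ) : Prop :=
  ¬ Summable fun k : ℕ =>
      alphaP M (2 * (2 * (k + 1))) ^ (-(1 : ℝ) / (2 * (k + 1) : ℝ))

/-- Assumption A of Bose–Sen for the matrix `X_n = (x_{ij,n})` with thresholds `t n`,
kernels `g k n` (representing `g_{2k,n}`) and limits `glim k` (representing `g_{2k}`). -/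
structure AssumptionA {Ω : Type*} [MeasurableSpace Ω] (P : Measure Ω)
    (p : ℕ → ℕ) (y : ℝ) (x : (n : ℕ) → Fin (p n) → Fin n → Ω → ℝ)
    (t : ℕ → ℝ≥0∞) (g : ℕ → ℕ → ℝ → ℝ → ℝ) (glim : ℕ → ℝ → ℝ → ℝ) : Prop where
  hprob : IsProbabilityMeasure P
  hy : 0 < y
  hp_lim : Tendsto (fun n => (p n : ℝ) / n) atTop (𝓝 y)
  hp_top : Tendsto p atTop atTop
  hmeas : ∀ n i j, Measurable (x n i j)
  hindep : ∀ n, iIndepFun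
      (fun ij : Fin (p n) × Fin n => x n ij.1 ij.2) P
  ht_pos : ∀ n, 0 < t n
  hg_eq : ∀ k, 1 ≤ k → ∀ n, ∀ i : Fin (p n), ∀ j : Fin n,
    (n : ℝ) * ∫ ω, trunc (t n) (x n i j ω) ^ (2 * k) ∂P =
      g k n ((i.1 + 1 : ℝ) / (p n)) ((j.1 + 1 : ℝ) / n)
  hg_odd : ∀ k, 1 ≤ k → ∀ α : ℝ, α < 1 →
    Tendsto (fun n : ℕ => (n : ℝ) ^ α *
        ⨆ i : Fin (p n), ⨆ j : Fin n,
          |∫ ω, trunc (t n) (x n i j ω) ^ (2 * k - 1) ∂P|) atTop (𝓝 0)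
  hg_bdd : ∀ k n, 1 ≤ k → ∃ C : ℝ,
    ∀ z ∈ Set.Icc (0 : ℝ) 1 ×ˢ Set.Icc (0 : ℝ) 1, |g k n z.1 z.2| ≤ C
  hg_riemann : ∀ k n, 1 ≤ k →
    ∀ᵐ z ∂(volume.restrict (Set.Icc (0 : ℝ) 1 ×ˢ Set.Icc (0 : ℝ) 1)),
      ContinuousAt (fun z : ℝ × ℝ => g k n z.1 z.2) z
  hg_unif : ∀ k, 1 ≤ k →
    TendstoUniformlyOn (fun n z => g k n z.1 z.2) (fun z : ℝ × ℝ => glim k z.1 z.2)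
      atTop (Set.Icc (0 : ℝ) 1 ×ˢ Set.Icc (0 : ℝ) 1)
  hCarleman : Carleman (Msup2 glim)

/-- The truncated matrix `Z_n` with entries `y_{ij} = x_{ij}·1[|x_{ij}| ≤ t_n]`. -/
noncomputable def Zmat {Ω : Type*} (p : ℕ → ℕ) (x : (n : ℕ) → Fin (p n) → Fin n → Ω → ℝ)
    (t : ℕ → ℝ≥0∞) (n : ℕ) (ω : Ω) : Matrix (Fin (p n)) (Fin n) ℝ :=
  Matrix.of fun i j => trunc (t n) (x n i j ω)

/-- The matrix `X_n` with entries `x_{ij,n}`. -/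
def Xmat {Ω : Type*} (p : ℕ → ℕ) (x : (n : ℕ) → Fin (p n) → Fin n → Ω → ℝ)
    (n : ℕ) (ω : Ω) : Matrix (Fin (p n)) (Fin n) ℝ :=
  Matrix.of fun i j => x n i j ω

end RMT

namespace RMT

/-- A quadruple of circuits is jointly matched: every entry-index value is attained at
least twice across the four circuits. -/
def JointlyMatched (k : ℕ) (πs : Fin 4 → ℕ → ℤ) : Prop :=
  ∀ m : Fin 4, ∀ i ∈ Finset.Icc 1 (2 * k), ∃ m' : Fin 4, ∃ i' ∈ Finset.Icc 1 (2 * k),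
    (m', i') ≠ (m, i) ∧ entryIdx (πs m') i' = entryIdx (πs m) i

/-- A quadruple of circuits is cross-matched: each circuit has some position whose
entry-index value also occurs in another circuit. -/
def CrossMatched (k : ℕ) (πs : Fin 4 → ℕ → ℤ) : Prop :=
  ∀ m : Fin 4, ∃ i ∈ Finset.Icc 1 (2 * k), ∃ m' : Fin 4, m' ≠ m ∧
    ∃ i' ∈ Finset.Icc 1 (2 * k), entryIdx (πs m') i' = entryIdx (πs m) i

/-- The set of jointly- and cross-matched quadruples of circuits of length `2k`
with exactly `b` distinct entry-index values. -/
def Qset (p n k b : ℕ) : Set (Fin 4 → ℕ → ℤ) :=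
  {πs | (∀ m : Fin 4, IsCircuit p n k (πs m)) ∧ JointlyMatched k πs ∧ CrossMatched k πs ∧
    {v : ℤ × ℤ | ∃ m : Fin 4, ∃ i ∈ Finset.Icc 1 (2 * k), entryIdx (πs m) i = v}.ncard = b}


/-! ### Auxiliary machinery for Statement 5 -/


namespace RMTAux

variable {α : Type*} [DecidableEq α]

/-- One step: either related by the closure of `r`, or joined by an edge of `E`. -/
def stepRel (r : α → α → Prop) (E : Finset (α × α)) (u v : α) : Prop :=
  Relation.EqvGen r u v ∨ (u, v) ∈ E ∨ (v, u) ∈ E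

lemma eqvGen_sub {r : α → α → Prop} (E : Finset (α × α)) {u v : α}
    (h : Relation.EqvGen r u v) : Relation.EqvGen (stepRel r E) u v :=
  Relation.EqvGen.rel _ _ (Or.inl h)

lemma cover_lemma (r : α → α → Prop) (E : Finset (α × α)) (roots : Finset α)
    (H : ∀ v : α, ∃ w ∈ roots, Relation.EqvGen (stepRel r E) w v) :
    ∃ W : Finset α, W.card ≤ roots.card + E.card ∧ ∀ v : α, ∃ w ∈ W, Relation.EqvGen r w v := by
  induction E using Finset.strongInduction generalizing roots with
  | _ E ih =>
  by_cases hall : ∀ v : α, ∃ w ∈ roots, Relation.EqvGen r w v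
  · exact ⟨roots, Nat.le_add_right _ _, hall⟩
  push_neg at hall
  obtain ⟨v₀, hv₀⟩ := hall
  set cov : α → Prop := fun x => ∃ w ∈ roots, Relation.EqvGen r w x with hcov
  have key : ∀ u v : α, Relation.EqvGen (stepRel r E) u v →
      ((cov u ↔ cov v) ∨ ∃ a c : α, ((a, c) ∈ E ∨ (c, a) ∈ E) ∧ cov a ∧ ¬ cov c) := by
    intro u v h
    induction h with
    | rel u v h =>
      rcases h with h | h | h
      · left
        constructor
        · rintro ⟨w, hw, hwu⟩; exact ⟨w, hw, hwu.trans _ _ _ h⟩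
        · rintro ⟨w, hw, hwv⟩; exact ⟨w, hw, hwv.trans _ _ _ (h.symm _ _)⟩
      · by_cases cu : cov u <;> by_cases cv : cov v
        · exact Or.inl (iff_of_true cu cv)
        · exact Or.inr ⟨u, v, Or.inl h, cu, cv⟩
        · exact Or.inr ⟨v, u, Or.inr h, cv, cu⟩
        · exact Or.inl (iff_of_false cu cv)
      · by_cases cu : cov u <;> by_cases cv : cov v
        · exact Or.inl (iff_of_true cu cv)
        · exact Or.inr ⟨u, v, Or.inr h, cu, cv⟩
        · exact Or.inr ⟨v, u, Or.inl h, cv, cu⟩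
        · exact Or.inl (iff_of_false cu cv)
    | refl u => exact Or.inl Iff.rfl
    | symm u v _ ih' => rcases ih' with h | h; exacts [Or.inl h.symm, Or.inr h]
    | trans u v w _ _ ih1 ih2 =>
      rcases ih1 with h1 | h1
      · rcases ih2 with h2 | h2
        · exact Or.inl (h1.trans h2)
        · exact Or.inr h2
      · exact Or.inr h1
  have hcross : ∃ a c : α, ((a, c) ∈ E ∨ (c, a) ∈ E) ∧ cov a ∧ ¬ cov c := by
    obtain ⟨w, hw, hconn⟩ := H v₀
    rcases key w v₀ hconn with h | h
    · exact absurd (h.mp ⟨w, hw, Relation.EqvGen.refl w⟩) (by simpa [hcov] using hv₀)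
    · exact h
  obtain ⟨a, c, he, ca, nc⟩ := hcross
  set e : α × α := if (a, c) ∈ E then (a, c) else (c, a) with hedef
  have heE : e ∈ E := by
    by_cases h : (a, c) ∈ E
    · simp [hedef, h]
    · rcases he with h' | h'; · exact absurd h' h
      simp [hedef, h, h']
  have heor : e = (a, c) ∨ e = (c, a) := by
    by_cases h : (a, c) ∈ E <;> simp [hedef, h]
  set E' : Finset (α × α) := E.erase e with hE'
  have hE'sub : E' ⊂ E := Finset.erase_ssubset heE
  set roots' : Finset α := insert c roots with hroots'
  have hcnot : c ∉ roots := fun h => nc ⟨c, h, Relation.EqvGen.refl c⟩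
  have hcE'a : ∃ w ∈ roots', Relation.EqvGen (stepRel r E') w a := by
    obtain ⟨w, hw, hwa⟩ := ca
    exact ⟨w, Finset.mem_insert_of_mem hw, eqvGen_sub E' hwa⟩
  have hcE'c : ∃ w ∈ roots', Relation.EqvGen (stepRel r E') w c :=
    ⟨c, Finset.mem_insert_self _ _, Relation.EqvGen.refl c⟩
  have key2 : ∀ u v : α, Relation.EqvGen (stepRel r E) u v →
      (Relation.EqvGen (stepRel r E') u v ∨
        ((∃ w ∈ roots', Relation.EqvGen (stepRel r E') w u) ∧
          (∃ w ∈ roots', Relation.EqvGen (stepRel r E') w v))) := by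
    intro u v h
    induction h with
    | rel u v h =>
      rcases h with h | h | h
      · exact Or.inl (Relation.EqvGen.rel _ _ (Or.inl h))
      · by_cases h' : (u, v) = e
        · right
          rcases heor with h'' | h'' <;> rw [h''] at h' <;>
            rcases Prod.mk.injEq .. ▸ h' with ⟨rfl, rfl⟩
          · exact ⟨hcE'a, hcE'c⟩
          · exact ⟨hcE'c, hcE'a⟩
        · exact Or.inl (Relation.EqvGen.rel _ _ (Or.inr (Or.inl (Finset.mem_erase.2 ⟨h', h⟩))))
      · by_cases h' : (v, u) = e
        · right
          rcases heor with h'' | h'' <;> rw [h''] at h' <;>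
            rcases Prod.mk.injEq .. ▸ h' with ⟨rfl, rfl⟩
          · exact ⟨hcE'c, hcE'a⟩
          · exact ⟨hcE'a, hcE'c⟩
        · exact Or.inl (Relation.EqvGen.rel _ _ (Or.inr (Or.inr (Finset.mem_erase.2 ⟨h', h⟩))))
    | refl u => exact Or.inl (Relation.EqvGen.refl u)
    | symm u v _ ih' =>
      rcases ih' with h | h
      · exact Or.inl (h.symm _ _)
      · exact Or.inr ⟨h.2, h.1⟩
    | trans u v w _ _ ih1 ih2 =>
      rcases ih1 with h1 | h1
      · rcases ih2 with h2 | h2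
        · exact Or.inl (h1.trans _ _ _ h2)
        · obtain ⟨⟨w1, hw1, hw1v⟩, hcw⟩ := h2
          exact Or.inr ⟨⟨w1, hw1, hw1v.trans _ _ _ (h1.symm _ _)⟩, hcw⟩
      · rcases ih2 with h2 | h2
        · obtain ⟨hcu, ⟨w1, hw1, hw1v⟩⟩ := h1
          exact Or.inr ⟨hcu, ⟨w1, hw1, hw1v.trans _ _ _ h2⟩⟩
        · exact Or.inr ⟨h1.1, h2.2⟩
  have H' : ∀ v : α, ∃ w ∈ roots', Relation.EqvGen (stepRel r E') w v := by
    intro v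
    obtain ⟨w, hw, hconn⟩ := H v
    rcases key2 w v hconn with h | h
    · exact ⟨w, Finset.mem_insert_of_mem hw, h⟩
    · exact h.2
  obtain ⟨W, hWcard, hWcov⟩ := ih E' hE'sub roots' H'
  refine ⟨W, ?_, hWcov⟩
  have h1 : roots'.card ≤ roots.card + 1 := Finset.card_insert_le _ _
  have h2 : E'.card = E.card - 1 := Finset.card_erase_of_mem heE
  have h3 : 1 ≤ E.card := Finset.card_pos.2 ⟨e, heE⟩
  omega

end RMTAux


namespace RMTAux

lemma fin4cases : ∀ q : Fin 4, q = 0 ∨ q = 1 ∨ q = 2 ∨ q = 3 := by decide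

lemma twoRoots (r : Fin 4 → Fin 4 → Prop) (hrefl : ∀ m, r m m)
    (hsymm : ∀ {a b}, r a b → r b a) (htrans : ∀ {a b c}, r a b → r b c → r a c)
    (h : ∀ m, ∃ m', m' ≠ m ∧ r m m') : ∃ a b, ∀ m, r m a ∨ r m b := by
  have habs : ∀ m : Fin 4, ¬ r m 0 → ∃ p, p ≠ m ∧ r m p ∧ p ≠ 0 := by
    intro m hm
    obtain ⟨p, hp, hrp⟩ := h m
    exact ⟨p, hp, hrp, fun h0 => hm (h0 ▸ hrp)⟩
  by_cases h1 : r 1 0 <;> by_cases h2 : r 2 0 <;> by_cases h3 : r 3 0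
  · exact ⟨0, 0, fun m => by rcases fin4cases m with rfl|rfl|rfl|rfl <;>
      simp [hrefl, h1, h2, h3]⟩
  · refine ⟨0, 3, fun m => ?_⟩
    rcases fin4cases m with rfl|rfl|rfl|rfl
    exacts [Or.inl (hrefl 0), Or.inl h1, Or.inl h2, Or.inr (hrefl 3)]
  · refine ⟨0, 2, fun m => ?_⟩
    rcases fin4cases m with rfl|rfl|rfl|rfl
    exacts [Or.inl (hrefl 0), Or.inl h1, Or.inr (hrefl 2), Or.inl h3]
  · refine ⟨0, 2, fun m => ?_⟩
    rcases fin4cases m with rfl|rfl|rfl|rfl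
    · exact Or.inl (hrefl 0)
    · exact Or.inl h1
    · exact Or.inr (hrefl 2)
    · obtain ⟨p, hp, hrp⟩ := h 3
      rcases fin4cases p with rfl|rfl|rfl|rfl
      exacts [Or.inl hrp, Or.inl (htrans hrp h1), Or.inr hrp, absurd rfl hp]
  · refine ⟨0, 1, fun m => ?_⟩
    rcases fin4cases m with rfl|rfl|rfl|rfl
    exacts [Or.inl (hrefl 0), Or.inr (hrefl 1), Or.inl h2, Or.inl h3]
  · refine ⟨0, 1, fun m => ?_⟩
    rcases fin4cases m with rfl|rfl|rfl|rfl
    · exact Or.inl (hrefl 0)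
    · exact Or.inr (hrefl 1)
    · exact Or.inl h2
    · obtain ⟨p, hp, hrp⟩ := h 3
      rcases fin4cases p with rfl|rfl|rfl|rfl
      exacts [Or.inl hrp, Or.inr hrp, Or.inl (htrans hrp h2), absurd rfl hp]
  · refine ⟨0, 1, fun m => ?_⟩
    rcases fin4cases m with rfl|rfl|rfl|rfl
    · exact Or.inl (hrefl 0)
    · exact Or.inr (hrefl 1)
    · obtain ⟨p, hp, hrp⟩ := h 2
      rcases fin4cases p with rfl|rfl|rfl|rfl
      exacts [Or.inl hrp, Or.inr hrp, absurd rfl hp, Or.inl (htrans hrp h3)]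
    · exact Or.inl h3
  · exfalso
    obtain ⟨s, hs, hrs⟩ := h 0
    rcases fin4cases s with rfl|rfl|rfl|rfl
    exacts [hs rfl, h1 (hsymm hrs), h2 (hsymm hrs), h3 (hsymm hrs)]

end RMTAux

namespace S5

open RMTAux

/-- Vertex positions of a quadruple of circuits. -/
abbrev VPos (k : ℕ) := Fin 4 × Fin (2 * k + 1)

/-- Edge positions: `(m, i)` stands for the entry-index position `i+1` of circuit `m`. -/
abbrev EPos (k : ℕ) := Fin 4 × Fin (2 * k)

/-- Match patterns for edge positions. -/
abbrev Pat (k : ℕ) := EPos k → EPos k → Bool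

def vertexVal {k : ℕ} (πs : Fin 4 → ℕ → ℤ) (v : VPos k) : ℤ := πs v.1 v.2.val

def edgeVal {k : ℕ} (πs : Fin 4 → ℕ → ℤ) (e : EPos k) : ℤ × ℤ :=
  entryIdx (πs e.1) (e.2.val + 1)

/-- The vertex position carrying the first (even-position) coordinate of the edge. -/
def fstV {k : ℕ} (e : EPos k) : VPos k :=
  (e.1, if Odd (e.2.val + 1) then e.2.castSucc else e.2.succ)

/-- The vertex position carrying the second (odd-position) coordinate of the edge. -/
def sndV {k : ℕ} (e : EPos k) : VPos k :=
  (e.1, if Odd (e.2.val + 1) then e.2.succ else e.2.castSucc)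

def patt {k : ℕ} (πs : Fin 4 → ℕ → ℤ) : Pat k :=
  fun e e' => decide (edgeVal πs e = edgeVal πs e')

def baseRel {k : ℕ} (P : Pat k) (u v : VPos k) : Prop :=
  (∃ m : Fin 4, u = (m, (0 : Fin (2 * k + 1))) ∧ v = (m, Fin.last (2 * k))) ∨
  (∃ e e' : EPos k, P e e' = true ∧
    ((u = fstV e ∧ v = fstV e') ∨ (u = sndV e ∧ v = sndV e')))

lemma vertexVal_fstV {k : ℕ} (πs : Fin 4 → ℕ → ℤ) (e : EPos k) :
    vertexVal πs (fstV e) = (edgeVal πs e).1 := by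
  by_cases h : Odd (e.2.val + 1) <;>
    simp [vertexVal, fstV, edgeVal, entryIdx, h, Fin.coe_castSucc, Fin.val_succ]

lemma vertexVal_sndV {k : ℕ} (πs : Fin 4 → ℕ → ℤ) (e : EPos k) :
    vertexVal πs (sndV e) = (edgeVal πs e).2 := by
  by_cases h : Odd (e.2.val + 1) <;>
    simp [vertexVal, sndV, edgeVal, entryIdx, h, Fin.coe_castSucc, Fin.val_succ]

lemma baseRel_sound {k q n : ℕ} {πs : Fin 4 → ℕ → ℤ}
    (hc : ∀ m : Fin 4, IsCircuit q n k (πs m)) {u v : VPos k}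
    (h : Relation.EqvGen (baseRel (patt πs)) u v) : vertexVal πs u = vertexVal πs v := by
  induction h with
  | rel u v h =>
    rcases h with ⟨m, rfl, rfl⟩ | ⟨e, e', hP, h | h⟩
    · simpa [vertexVal] using (hc m).1
    · obtain ⟨rfl, rfl⟩ := h
      rw [vertexVal_fstV, vertexVal_fstV, of_decide_eq_true hP]
    · obtain ⟨rfl, rfl⟩ := h
      rw [vertexVal_sndV, vertexVal_sndV, of_decide_eq_true hP]
  | refl u => rfl
  | symm u v _ ih => exact ih.symm
  | trans u v w _ _ ih1 ih2 => exact ih1.trans ih2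

lemma vertexVal_bounds {k q n N : ℕ} (hq : q ≤ N) (hn : n ≤ N) {πs : Fin 4 → ℕ → ℤ}
    (hc : ∀ m : Fin 4, IsCircuit q n k (πs m)) (v : VPos k) :
    1 ≤ vertexVal πs v ∧ vertexVal πs v ≤ (N : ℤ) := by
  have hiv : (v.2 : ℕ) ≤ 2 * k := by omega
  rcases Nat.even_or_odd (v.2 : ℕ) with ⟨j, hj⟩ | ⟨j, hj⟩
  · have hjk : j ≤ k := by omega
    have h2j : 2 * j = (v.2 : ℕ) := by omega
    have := (hc v.1).2.1 j hjk
    rw [h2j] at this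
    refine ⟨this.1, this.2.trans ?_⟩
    exact_mod_cast Nat.cast_le.2 hq
  · have hj1 : 1 ≤ j + 1 := by omega
    have hjk : j + 1 ≤ k := by omega
    have h2j : 2 * (j + 1) - 1 = (v.2 : ℕ) := by omega
    have := (hc v.1).2.2.1 (j + 1) hj1 hjk
    rw [h2j] at this
    refine ⟨this.1, this.2.trans ?_⟩
    exact_mod_cast Nat.cast_le.2 hn

end S5

namespace S5
open RMTAux Finset

variable {k q n b : ℕ} {πs : Fin 4 → ℕ → ℤ}

lemma good_of_mem (hk : 1 ≤ k) (hπ : πs ∈ Qset q n k b) :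
    ∃ S : Fin (b + 2) → VPos k,
      ∀ v : VPos k, ∃ j, Relation.EqvGen (baseRel (patt πs)) (S j) v := by
  classical
  obtain ⟨hcirc, _hjm, hcm, hncard⟩ := hπ
  set r : VPos k → VPos k → Prop := baseRel (patt (k := k) πs) with hr
  have hEne : Nonempty (EPos k) := ⟨(0, ⟨0, by omega⟩)⟩
  set eOf : ℤ × ℤ → EPos k := Function.invFun (edgeVal πs) with heOfdef
  have heOf : ∀ e : EPos k, edgeVal πs (eOf (edgeVal πs e)) = edgeVal πs e :=
    fun e => Function.invFun_eq ⟨e, rfl⟩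
  set T : Finset (ℤ × ℤ) := Finset.image (edgeVal πs) Finset.univ with hT
  set E : Finset (VPos k × VPos k) := T.image (fun w => (fstV (eOf w), sndV (eOf w))) with hE
  -- `T` has exactly `b` elements
  have hsetT : {v : ℤ × ℤ | ∃ m : Fin 4, ∃ i ∈ Finset.Icc 1 (2 * k),
      entryIdx (πs m) i = v} = (↑T : Set (ℤ × ℤ)) := by
    ext w
    simp only [Set.mem_setOf_eq, hT, coe_image, coe_univ, Set.image_univ, Set.mem_range]
    constructor
    · rintro ⟨m, i, hi, hw⟩
      rw [Finset.mem_Icc] at hi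
      have hilt : i - 1 < 2 * k := by omega
      refine ⟨(m, ⟨i - 1, hilt⟩), ?_⟩
      have h1 : i - 1 + 1 = i := by omega
      simpa [edgeVal, h1] using hw
    · rintro ⟨⟨m, i⟩, hw⟩
      exact ⟨m, i.val + 1, Finset.mem_Icc.2 ⟨by omega, by omega⟩, hw⟩
  have hTcard : T.card = b := by
    rw [← hncard, hsetT, Set.ncard_coe_finset]
  -- connectivity through the value-sharing structure
  have conn_edge : ∀ e : EPos k, Relation.EqvGen (stepRel r E) (fstV e) (sndV e) := by
    intro e
    set w := edgeVal πs e with hw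
    have hP : patt πs e (eOf w) = true := decide_eq_true (by rw [heOf e])
    have h1 : r (fstV e) (fstV (eOf w)) := Or.inr ⟨e, eOf w, hP, Or.inl ⟨rfl, rfl⟩⟩
    have h3 : r (sndV e) (sndV (eOf w)) := Or.inr ⟨e, eOf w, hP, Or.inr ⟨rfl, rfl⟩⟩
    have hwT : w ∈ T := by
      rw [hT]; exact Finset.mem_image_of_mem _ (Finset.mem_univ e)
    have h2 : (fstV (eOf w), sndV (eOf w)) ∈ E := by
      rw [hE]; exact Finset.mem_image_of_mem _ hwT
    have c1 : Relation.EqvGen (stepRel r E) (fstV e) (fstV (eOf w)) :=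
      Relation.EqvGen.rel _ _ (Or.inl (Relation.EqvGen.rel _ _ h1))
    have c2 : Relation.EqvGen (stepRel r E) (fstV (eOf w)) (sndV (eOf w)) :=
      Relation.EqvGen.rel _ _ (Or.inr (Or.inl h2))
    have c3 : Relation.EqvGen (stepRel r E) (sndV (eOf w)) (sndV e) :=
      Relation.EqvGen.symm _ _ (Relation.EqvGen.rel _ _ (Or.inl (Relation.EqvGen.rel _ _ h3)))
    exact (c1.trans _ _ _ c2).trans _ _ _ c3
  have conn_step : ∀ (m : Fin 4) (i : Fin (2 * k)),
      Relation.EqvGen (stepRel r E) (m, i.castSucc) (m, i.succ) := by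
    intro m i
    have := conn_edge (m, i)
    by_cases h : Odd (i.val + 1)
    · simpa [fstV, sndV, h] using this
    · simpa [fstV, sndV, h] using this.symm _ _
  have conn_zero : ∀ (m : Fin 4) (i : Fin (2 * k + 1)),
      Relation.EqvGen (stepRel r E) (m, (0 : Fin (2 * k + 1))) (m, i) := by
    intro m i
    obtain ⟨iv, hiv⟩ := i
    induction iv with
    | zero => exact Relation.EqvGen.refl _
    | succ j ihj =>
      have hj : j < 2 * k + 1 := by omega
      have hj' : j < 2 * k := by omega
      refine Relation.EqvGen.trans _ _ _ (ihj hj) ?_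
      have := conn_step m ⟨j, hj'⟩
      have e1 : (⟨j, hj'⟩ : Fin (2 * k)).castSucc = ⟨j, hj⟩ := rfl
      have e2 : (⟨j, hj'⟩ : Fin (2 * k)).succ = ⟨j + 1, hiv⟩ := rfl
      rwa [e1, e2] at this
  have conn_to_zero : ∀ v : VPos k,
      Relation.EqvGen (stepRel r E) (v.1, (0 : Fin (2 * k + 1))) v := by
    intro v
    have := conn_zero v.1 v.2
    simpa using this
  -- the circuit-sharing relation
  set RelC : Fin 4 → Fin 4 → Prop := fun m m' =>
    Relation.EqvGen (stepRel r E) (m, (0 : Fin (2 * k + 1))) (m', 0) with hRelC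
  have hpartner : ∀ m : Fin 4, ∃ m', m' ≠ m ∧ RelC m m' := by
    intro m
    obtain ⟨i, hi, m', hne, i', hi', heq⟩ := hcm m
    rw [Finset.mem_Icc] at hi hi'
    refine ⟨m', hne, ?_⟩
    set e1 : EPos k := (m, ⟨i - 1, by omega⟩) with he1
    set e2 : EPos k := (m', ⟨i' - 1, by omega⟩) with he2
    have hval : edgeVal πs e1 = edgeVal πs e2 := by
      have h1 : i - 1 + 1 = i := by omega
      have h2 : i' - 1 + 1 = i' := by omega
      simp only [edgeVal, he1, he2, h1, h2]
      exact heq.symm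
    have hP : patt πs e1 e2 = true := decide_eq_true hval
    have hmid : Relation.EqvGen (stepRel r E) (fstV e1) (fstV e2) :=
      Relation.EqvGen.rel _ _ (Or.inl (Relation.EqvGen.rel _ _
        (Or.inr ⟨e1, e2, hP, Or.inl ⟨rfl, rfl⟩⟩)))
    have ha : Relation.EqvGen (stepRel r E) (m, (0 : Fin (2 * k + 1))) (fstV e1) := by
      have := conn_to_zero (fstV e1)
      simpa [fstV, he1] using this
    have hb : Relation.EqvGen (stepRel r E) (m', (0 : Fin (2 * k + 1))) (fstV e2) := by
      have := conn_to_zero (fstV e2)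
      simpa [fstV, he2] using this
    exact (ha.trans _ _ _ hmid).trans _ _ _ (hb.symm _ _)
  obtain ⟨m0, m1, hcov⟩ := twoRoots RelC (fun m => Relation.EqvGen.refl _)
    (fun h => h.symm _ _) (fun h1 h2 => h1.trans _ _ _ h2) hpartner
  set roots : Finset (VPos k) :=
    {(m0, (0 : Fin (2 * k + 1))), (m1, (0 : Fin (2 * k + 1)))} with hroots
  have H : ∀ v : VPos k, ∃ w ∈ roots, Relation.EqvGen (stepRel r E) w v := by
    intro v
    rcases hcov v.1 with h | h
    · exact ⟨(m0, 0), by simp [hroots], (h.symm _ _).trans _ _ _ (conn_to_zero v)⟩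
    · exact ⟨(m1, 0), by simp [hroots], (h.symm _ _).trans _ _ _ (conn_to_zero v)⟩
  obtain ⟨W, hWcard, hWcov⟩ := cover_lemma r E roots H
  have hWle : W.card ≤ b + 2 := by
    have h1 : roots.card ≤ 2 := by
      apply (Finset.card_insert_le _ _).trans
      simp
    have h2 : E.card ≤ b := hTcard ▸ Finset.card_image_le
    omega
  refine ⟨fun j => W.toList.getD j.val (m0, 0), fun v => ?_⟩
  obtain ⟨w, hw, hconn⟩ := hWcov v
  have hwl : w ∈ W.toList := Finset.mem_toList.2 hw
  obtain ⟨idx, hidx, hval⟩ := List.mem_iff_getElem.1 hwl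
  have hlen : W.toList.length = W.card := Finset.length_toList W
  refine ⟨⟨idx, by omega⟩, ?_⟩
  have hgd : W.toList.getD idx (m0, 0) = w := by
    rw [List.getD_eq_getElem _ _ (by omega)]
    exact hval
  show Relation.EqvGen r (W.toList.getD idx (m0, 0)) v
  rw [hgd]
  exact hconn

end S5

namespace S5
open RMTAux Finset

/-- The predicate that a pattern admits a `(b+2)`-element covering system of
representatives for the vertex identification relation. -/
def GoodPat (k b : ℕ) (P : Pat k) : Prop :=
  ∃ S : Fin (b + 2) → VPos k, ∀ v : VPos k, ∃ j, Relation.EqvGen (baseRel P) (S j) v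

noncomputable def secOf (k b : ℕ) (P : Pat k) : Fin (b + 2) → VPos k := by
  classical exact if h : GoodPat k b P then h.choose else fun _ => (0, ⟨0, by omega⟩)

lemma secOf_spec {k b : ℕ} {P : Pat k} (h : GoodPat k b P) :
    ∀ v : VPos k, ∃ j, Relation.EqvGen (baseRel P) (secOf k b P j) v := by
  rw [secOf]
  split
  · exact h.choose_spec
  · exact absurd h (by assumption)

/-- The core counting bound. -/
lemma core (k q n b N : ℕ) (hk : 1 ≤ k) (hq : q ≤ N) (hn : n ≤ N) :
    (Qset q n k b).ncard ≤ Fintype.card (Pat k) * N ^ (b + 2) := by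
  classical
  set f : (Fin 4 → ℕ → ℤ) → Pat k × (Fin (b + 2) → ℤ) :=
    fun πs => (patt πs, fun j => vertexVal πs (secOf k b (patt πs) j)) with hf
  set target : Finset (Pat k × (Fin (b + 2) → ℤ)) :=
    Finset.univ ×ˢ Fintype.piFinset (fun _ : Fin (b + 2) => Finset.Icc (1 : ℤ) (N : ℤ))
    with htarget
  have hmaps : ∀ πs ∈ Qset q n k b, f πs ∈ (↑target : Set (Pat k × (Fin (b + 2) → ℤ))) := by
    intro πs hπ
    simp only [htarget, hf, Finset.coe_product, Set.mem_prod, Finset.mem_coe,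
      Finset.mem_univ, true_and, Fintype.mem_piFinset]
    intro j
    rw [Finset.mem_Icc]
    exact vertexVal_bounds hq hn hπ.1 _
  have hinj : Set.InjOn f (Qset q n k b) := by
    intro πs hπ πs' hπ' hEq
    have hP : patt (k := k) πs = patt πs' := congrArg Prod.fst hEq
    have hg := congrArg Prod.snd hEq
    simp only [hf] at hg
    have hgood : GoodPat k b (patt πs) := good_of_mem hk hπ
    have hvals : ∀ v : VPos k, vertexVal πs v = vertexVal πs' v := by
      intro v
      obtain ⟨j, hj⟩ := secOf_spec hgood v
      have e1 : vertexVal πs (secOf k b (patt πs) j) = vertexVal πs v :=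
        baseRel_sound hπ.1 hj
      have hj' : Relation.EqvGen (baseRel (patt πs')) (secOf k b (patt πs) j) v := hP ▸ hj
      have e2 : vertexVal πs' (secOf k b (patt πs) j) = vertexVal πs' v :=
        baseRel_sound hπ'.1 hj'
      have e3 : vertexVal πs (secOf k b (patt πs) j)
          = vertexVal πs' (secOf k b (patt πs') j) := congrFun hg j
      rw [← e1, e3, ← hP, e2]
    funext m t
    by_cases ht : t ≤ 2 * k
    · have := hvals (m, ⟨t, by omega⟩)
      simpa [vertexVal] using this
    · rw [(hπ.1 m).2.2.2 t (by omega), (hπ'.1 m).2.2.2 t (by omega)]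
  have hcount : (Qset q n k b).ncard ≤ (↑target : Set _).ncard :=
    Set.ncard_le_ncard_of_injOn f hmaps hinj (Finset.finite_toSet _)
  refine hcount.trans ?_
  rw [Set.ncard_coe_finset]
  rw [htarget, Finset.card_product, Finset.card_univ]
  apply Nat.mul_le_mul_left
  rw [Fintype.card_piFinset]
  have hcard : (Finset.Icc (1 : ℤ) (N : ℤ)).card = N := by
    rw [Int.card_Icc]
    omega
  simp [hcard]

end S5

/-- If `p(n)/n → y ∈ (0,∞)` then there is a constant `C` such that the
number `Q_{k,4}^b` of jointly- and cross-matched quadruples of circuits of length `2k`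
with exactly `b` distinct entry-index values satisfies `Q_{k,4}^b ≤ C·n^{b+2}` for all
`n` and all `1 ≤ b ≤ 4k`. -/
theorem statement5 (k : ℕ) (hk : 1 ≤ k) (p : ℕ → ℕ) (y : ℝ) (hy : 0 < y)
    (hp : Tendsto (fun n : ℕ => (p n : ℝ) / n) atTop (𝓝 y)) :
    ∃ C : ℝ, ∀ n : ℕ, 1 ≤ n → ∀ b : ℕ, 1 ≤ b → b ≤ 4 * k →
      ((Qset (p n) n k b).ncard : ℝ) ≤ C * (n : ℝ) ^ (b + 2) := by
  classical
  have h1 : ∀ᶠ n in Filter.atTop, (p n : ℝ) / n ≤ y + 1 :=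
    hp.eventually (eventually_le_nhds (by linarith))
  obtain ⟨N₀, hN₀⟩ := Filter.eventually_atTop.1 h1
  set A : ℕ := ⌈y + 1⌉₊ + 1 with hA
  set M : ℕ := (Finset.range (N₀ + 1)).sup p with hM
  set D : ℕ := A + M + 1 with hD
  have hD1 : 1 ≤ D := by omega
  have hpn : ∀ n : ℕ, 1 ≤ n → p n ≤ D * n := by
    intro n hn
    by_cases hc : N₀ ≤ n
    · have h2 := hN₀ n hc
      have hn0 : (0 : ℝ) < (n : ℝ) := by exact_mod_cast hn
      rw [div_le_iff₀ hn0] at h2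
      have hyA : (y + 1 : ℝ) ≤ (A : ℝ) := by
        have := Nat.le_ceil (y + 1)
        push_cast [hA]
        linarith
      have h3 : (p n : ℝ) ≤ (A : ℝ) * n :=
        h2.trans (mul_le_mul_of_nonneg_right hyA hn0.le)
      have h4 : p n ≤ A * n := by exact_mod_cast h3
      calc p n ≤ A * n := h4
        _ ≤ D * n := Nat.mul_le_mul_right n (by omega)
    · have h2 : p n ≤ M := Finset.le_sup (Finset.mem_range.2 (by omega))
      calc p n ≤ M := h2
        _ ≤ D * 1 := by omega
        _ ≤ D * n := Nat.mul_le_mul_left D hn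
  refine ⟨(Fintype.card (S5.Pat k) : ℝ) * (D : ℝ) ^ (4 * k + 2), ?_⟩
  intro n hn b hb1 hb2
  have hcore := S5.core k (p n) n b (D * n) hk (hpn n hn)
    (by calc n = 1 * n := (one_mul n).symm
          _ ≤ D * n := Nat.mul_le_mul_right n hD1)
  have hcast : ((Qset (p n) n k b).ncard : ℝ)
      ≤ (Fintype.card (S5.Pat k) : ℝ) * ((D : ℝ) * (n : ℝ)) ^ (b + 2) := by
    have := (Nat.cast_le (α := ℝ)).2 hcore
    push_cast at this
    convert this using 2
  refine hcast.trans ?_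
  rw [mul_pow, ← mul_assoc]
  apply mul_le_mul_of_nonneg_right _ (by positivity)
  apply mul_le_mul_of_nonneg_left _ (by positivity)
  have hD1' : (1 : ℝ) ≤ (D : ℝ) := by exact_mod_cast hD1
  exact pow_le_pow_right₀ hD1' (by omega)


end RMT
end

section
/- For every k ≥ 1: SS(2k) ∩ P₂(2k) = NC₂(2k), and NCE(2k) ⊆ SS(2k) ⊆ E(2k). -/
open MeasureTheory Filter Finset ProbabilityTheory Matrix
open scoped ENNReal NNReal Topology

namespace RMT

lemma even_sum' {ι : Type*} {s : Finset ι} {f : ι → ℕ} (h : ∀ i ∈ s, Even (f i)) :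
    Even (∑ i ∈ s, f i) := by
  induction s using Finset.cons_induction with
  | empty => simp
  | cons a s ha ih =>
    rw [Finset.sum_cons]
    exact (h a (Finset.mem_cons_self _ _)).add (ih fun i hi => h i (Finset.mem_cons.2 (Or.inr hi)))

lemma gap_lemma {s : Finset ℕ} {ω : Finpartition s} (hnc : NonCrossing ω)
    {C D : Finset ℕ} (hC : C ∈ ω.parts) (hD : D ∈ ω.parts) (hCD : C ≠ D)
    {a b : ℕ} (ha : a ∈ D) (hb : b ∈ D) :
    C ∩ Finset.Ioo a b = ∅ ∨ C ⊆ Finset.Ioo a b := by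
  by_contra h
  push_neg at h
  obtain ⟨h1, h2⟩ := h
  obtain ⟨x, hx⟩ := h1
  rw [Finset.mem_inter, Finset.mem_Ioo] at hx
  obtain ⟨hxC, hax, hxb⟩ := hx
  obtain ⟨y, hyC, hy⟩ := Finset.not_subset.1 h2
  rw [Finset.mem_Ioo] at hy
  have hdisj : Disjoint C D := ω.disjoint (Finset.mem_coe.2 hC) (Finset.mem_coe.2 hD) hCD
  have hya : y ≠ a := fun h => (Finset.disjoint_left.1 hdisj hyC) (h ▸ ha)
  have hyb : y ≠ b := fun h => (Finset.disjoint_left.1 hdisj hyC) (h ▸ hb)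
  rcases (by omega : y < a ∨ b < y) with hlt | hlt
  · exact hnc ⟨C, hC, D, hD, hCD, y, hyC, x, hxC, a, ha, b, hb, hlt, hax, hxb⟩
  · exact hnc ⟨D, hD, C, hC, hCD.symm, a, ha, b, hb, x, hxC, y, hyC, hax, hxb, hlt⟩

lemma gap_even {s : Finset ℕ} {ω : Finpartition s} (hnc : NonCrossing ω)
    (hev : EvenPartition ω) {D : Finset ℕ} (hD : D ∈ ω.parts) {a b : ℕ}
    (ha : a ∈ D) (hb : b ∈ D)
    (hcons : ∀ x ∈ D, ¬ (a < x ∧ x < b)) (hsub : Finset.Ioo a b ⊆ s) :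
    Even (Finset.Ioo a b).card := by
  have heq : Finset.Ioo a b = ω.parts.biUnion (fun C => C ∩ Finset.Ioo a b) := by
    ext x
    simp only [Finset.mem_biUnion, Finset.mem_inter]
    constructor
    · intro hx
      obtain ⟨C, hC, hxC⟩ := ω.exists_mem (hsub hx)
      exact ⟨C, hC, hxC, hx⟩
    · rintro ⟨C, _, _, hx⟩; exact hx
  rw [heq, Finset.card_biUnion]
  · apply even_sum'
    intro C hC
    by_cases hCD : C = D
    · subst hCD
      have he : C ∩ Finset.Ioo a b = ∅ := by
        ext x
        simp only [Finset.mem_inter, Finset.mem_Ioo, Finset.notMem_empty, iff_false, not_and]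
        intro hxC h1 h2
        exact hcons x hxC ⟨h1, h2⟩
      simp [he]
    · rcases gap_lemma hnc hC hD hCD ha hb with h | h
      · simp [h]
      · rw [Finset.inter_eq_left.2 h]; exact hev C hC
  · intro C hC C' hC' hne
    exact Finset.disjoint_left.2 fun x hx hx' =>
      Finset.disjoint_left.1
        (ω.disjoint (Finset.mem_coe.2 hC) (Finset.mem_coe.2 hC') hne)
        (Finset.mem_inter.1 hx).1 (Finset.mem_inter.1 hx').1

lemma parity_flip {s : Finset ℕ} {ω : Finpartition s} (hnc : NonCrossing ω)
    (hev : EvenPartition ω) {D : Finset ℕ} (hD : D ∈ ω.parts) {a b : ℕ}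
    (ha : a ∈ D) (hb : b ∈ D) (hab : a < b)
    (hcons : ∀ x ∈ D, ¬ (a < x ∧ x < b)) (hsub : Finset.Ioo a b ⊆ s) :
    (Odd a ↔ Even b) := by
  have h := gap_even hnc hev hD ha hb hcons hsub
  rw [Nat.card_Ioo] at h
  obtain ⟨m, hm⟩ := h
  rw [Nat.odd_iff, Nat.even_iff]
  omega

lemma alt_count : ∀ n (S : Finset ℕ), S.card = n → Even n →
    (∀ a ∈ S, ∀ b ∈ S, a < b → (∀ x ∈ S, ¬(a < x ∧ x < b)) → (Odd a ↔ Even b)) →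
    (S.filter (fun x => Odd x)).card = (S.filter (fun x => Even x)).card := by
  intro n
  induction n using Nat.strong_induction_on with
  | _ n ih =>
    intro S hcard hev hP
    rcases S.eq_empty_or_nonempty with rfl | hne
    · simp
    · have h1 : 1 ≤ S.card := Finset.card_pos.2 hne
      have h2 : 2 ≤ n := by obtain ⟨m, hm⟩ := hev; omega
      set a := S.min' hne with hadef
      have haS : a ∈ S := S.min'_mem hne
      have hamin : ∀ x ∈ S, a ≤ x := fun x hx => S.min'_le x hx
      have hne' : (S.erase a).Nonempty := by
        rw [← Finset.card_pos, Finset.card_erase_of_mem haS]; omega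
      set b := (S.erase a).min' hne' with hbdef
      have hbS' : b ∈ S.erase a := Finset.min'_mem _ _
      have hbS : b ∈ S := Finset.mem_of_mem_erase hbS'
      have hba : b ≠ a := Finset.ne_of_mem_erase hbS'
      have hab : a < b := lt_of_le_of_ne (hamin b hbS) hba.symm
      have hbmin : ∀ x ∈ S.erase a, b ≤ x := fun x hx => Finset.min'_le _ x hx
      have hconsS : ∀ x ∈ S, ¬(a < x ∧ x < b) := by
        rintro x hx ⟨hx1, hx2⟩
        have : x ∈ S.erase a := Finset.mem_erase.2 ⟨by omega, hx⟩
        have := hbmin x this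
        omega
      have hpar := hP a haS b hbS hab hconsS
      set T := (S.erase a).erase b with hT
      have hTmem : ∀ x, x ∈ T ↔ x ≠ b ∧ x ≠ a ∧ x ∈ S := by
        intro x; rw [hT, Finset.mem_erase, Finset.mem_erase]
      have hTS : ∀ x ∈ T, x ∈ S := fun x hx => ((hTmem x).1 hx).2.2
      have hbltT : ∀ x ∈ T, b < x := by
        intro x hx
        obtain ⟨hxb, hxa, hxS⟩ := (hTmem x).1 hx
        have := hbmin x (Finset.mem_erase.2 ⟨hxa, hxS⟩)
        omega
      have hcardT : T.card = n - 2 := by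
        rw [hT, Finset.card_erase_of_mem hbS', Finset.card_erase_of_mem haS]; omega
      have hPT : ∀ a' ∈ T, ∀ b' ∈ T, a' < b' → (∀ x ∈ T, ¬(a' < x ∧ x < b')) →
          (Odd a' ↔ Even b') := by
        intro a' ha' b' hb' hlt hc
        apply hP a' (hTS a' ha') b' (hTS b' hb') hlt
        rintro x hx ⟨hx1, hx2⟩
        have hba' : b < a' := hbltT a' ha'
        have hxT : x ∈ T := (hTmem x).2 ⟨by omega, by omega, hx⟩
        exact hc x hxT ⟨hx1, hx2⟩
      have hIH := ih (n - 2) (by omega) T hcardT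
        (by obtain ⟨m, hm⟩ := hev; exact ⟨m - 1, by omega⟩) hPT
      have haT : a ∉ T := fun h => ((hTmem a).1 h).2.1 rfl
      have hbT : b ∉ T := fun h => ((hTmem b).1 h).1 rfl
      have hS : S = insert a (insert b T) := by
        rw [hT, Finset.insert_erase hbS', Finset.insert_erase haS]
      rw [hS]
      rw [Finset.filter_insert, Finset.filter_insert, Finset.filter_insert,
        Finset.filter_insert]
      have hbO : b ∉ Finset.filter (fun x => Odd x) T :=
        fun h => hbT (Finset.mem_of_mem_filter _ h)
      have hbE : b ∉ Finset.filter (fun x => Even x) T :=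
        fun h => hbT (Finset.mem_of_mem_filter _ h)
      have haO : a ∉ insert b (Finset.filter (fun x => Odd x) T) := by
        simp only [Finset.mem_insert]
        rintro (h | h)
        · omega
        · exact haT (Finset.mem_of_mem_filter _ h)
      have haE : a ∉ insert b (Finset.filter (fun x => Even x) T) := by
        simp only [Finset.mem_insert]
        rintro (h | h)
        · omega
        · exact haT (Finset.mem_of_mem_filter _ h)
      rcases Nat.even_or_odd a with hea | hoa
      · have hnoa : ¬ Odd a := Nat.not_odd_iff_even.2 hea
        have hob : Odd b := Nat.not_even_iff_odd.1 (fun h => hnoa (hpar.2 h))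
        have hnob : ¬ Even b := Nat.not_even_iff_odd.2 hob
        rw [if_neg hnoa, if_pos hob, if_pos hea, if_neg hnob]
        rw [Finset.card_insert_of_notMem hbO,
          Finset.card_insert_of_notMem (fun h => haT (Finset.mem_of_mem_filter _ h)), hIH]
      · have hnoa : ¬ Even a := Nat.not_even_iff_odd.2 hoa
        have heb : Even b := hpar.1 hoa
        have hnb : ¬ Odd b := Nat.not_odd_iff_even.2 heb
        rw [if_pos hoa, if_neg hnb, if_neg hnoa, if_pos heb]
        rw [Finset.card_insert_of_notMem hbE,
          Finset.card_insert_of_notMem (fun h => haT (Finset.mem_of_mem_filter _ h)), hIH]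

/-- For every `k ≥ 1`: `SS(2k) ∩ P₂(2k) = NC₂(2k)` and
`NCE(2k) ⊆ SS(2k) ⊆ E(2k)`. -/
theorem statement6 (k : ℕ) (hk : 1 ≤ k) :
    (∀ ω : Finpartition (Finset.Icc 1 (2 * k)),
      (SpecialSymmetric ω ∧ PairPartition ω) ↔ (NonCrossing ω ∧ PairPartition ω)) ∧
    (∀ ω : Finpartition (Finset.Icc 1 (2 * k)),
      NonCrossing ω ∧ EvenPartition ω → SpecialSymmetric ω) ∧
    (∀ ω : Finpartition (Finset.Icc 1 (2 * k)),
      SpecialSymmetric ω → EvenPartition ω) := by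
  have hsub : ∀ (a b : ℕ), a ∈ Finset.Icc 1 (2 * k) → b ∈ Finset.Icc 1 (2 * k) →
      Finset.Ioo a b ⊆ Finset.Icc 1 (2 * k) := by
    intro a b ha hb
    rw [Finset.mem_Icc] at ha hb
    intro x hx
    rw [Finset.mem_Ioo] at hx
    rw [Finset.mem_Icc]
    omega
  have key : ∀ ω : Finpartition (Finset.Icc 1 (2 * k)),
      NonCrossing ω → EvenPartition ω → SpecialSymmetric ω := by
    intro ω hnc hev
    refine ⟨hev, ?_⟩
    intro B hB i hi j hj hij hcons B' hB' hne
    have hmem : ∀ {C : Finset ℕ}, C ∈ ω.parts → ∀ {x : ℕ}, x ∈ C →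
        x ∈ Finset.Icc 1 (2 * k) := by
      intro C hC x hx
      exact ω.le hC hx
    rcases gap_lemma hnc hB' hB hne hi hj with h | h
    · rw [h]; simp
    · rw [Finset.inter_eq_left.2 h]
      refine ⟨hev B' hB', ?_⟩
      apply alt_count B'.card B' rfl (hev B' hB')
      intro a ha b hb hab hc
      exact parity_flip hnc hev hB' ha hb hab hc
        (hsub a b (hmem hB' ha) (hmem hB' hb))
  have ssp_nc : ∀ ω : Finpartition (Finset.Icc 1 (2 * k)),
      SpecialSymmetric ω → PairPartition ω → NonCrossing ω := by
    rintro ω hss hp ⟨B, hB, B', hB', hne, a, haB, c, hcB, b, hbB', d, hdB', hab, hbc, hcd⟩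
    obtain ⟨u, v, huv, hBuv⟩ := Finset.card_eq_two.1 (hp B hB)
    obtain ⟨u', v', huv', hBuv'⟩ := Finset.card_eq_two.1 (hp B' hB')
    have hBmem : ∀ x ∈ B, x = a ∨ x = c := by
      intro x hx
      rw [hBuv, Finset.mem_insert, Finset.mem_singleton] at hx haB hcB
      rcases haB with rfl | rfl <;> rcases hcB with rfl | rfl <;>
        rcases hx with rfl | rfl <;> omega
    have hB'mem : ∀ x ∈ B', x = b ∨ x = d := by
      intro x hx
      rw [hBuv', Finset.mem_insert, Finset.mem_singleton] at hx hbB' hdB'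
      rcases hbB' with rfl | rfl <;> rcases hdB' with rfl | rfl <;>
        rcases hx with rfl | rfl <;> omega
    have hcons : ∀ x ∈ B, ¬(a < x ∧ x < c) := by
      rintro x hx ⟨h1, h2⟩
      rcases hBmem x hx with rfl | rfl <;> omega
    have h := (hss.2 B hB a haB c hcB (by omega) hcons B' hB' hne.symm).1
    have heq : B' ∩ Finset.Ioo a c = {b} := by
      ext x
      rw [Finset.mem_inter, Finset.mem_Ioo, Finset.mem_singleton]
      constructor
      · rintro ⟨hx, h1, h2⟩
        rcases hB'mem x hx with rfl | rfl <;> omega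
      · rintro rfl
        exact ⟨hbB', hab, hbc⟩
    rw [heq, Finset.card_singleton] at h
    exact (Nat.not_even_iff_odd.2 odd_one) h
  refine ⟨?_, fun ω h => key ω h.1 h.2, fun ω h => h.1⟩
  intro ω
  constructor
  · rintro ⟨hss, hp⟩
    exact ⟨ssp_nc ω hss hp, hp⟩
  · rintro ⟨hnc, hp⟩
    exact ⟨key ω hnc (fun B hB => by rw [hp B hB]; exact even_two), hp⟩


end RMT
end

section
/- For all integers m, t ≥ 1, the number of set partitions of {1,…,2mt} into exactly t blocks, each block being a union of exactly m of the consecutive pairs {2i−1, 2i} (1 ≤ i ≤ mt), equals (mt)! / (t!·(m!)^t). Moreover, every such partition is special symmetric (lies in SS_t(2mt)) and satisfies r(ω) = 0, i.e. has exactly one even generating vertex. -/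
open MeasureTheory Filter Finset ProbabilityTheory Matrix
open scoped ENNReal NNReal Topology

namespace RMT

/-- A partition of `{1,…,2mt}` into `t` blocks, each block being the union of exactly
`m` of the consecutive pairs `{2i−1, 2i}`, `1 ≤ i ≤ mt`. -/
def PairBlockPartition (m t : ℕ) (ω : Finpartition (Finset.Icc 1 (2 * (m * t)))) : Prop :=
  ω.parts.card = t ∧
    ∀ B ∈ ω.parts, ∃ s : Finset ℕ, s ⊆ Finset.Icc 1 (m * t) ∧ s.card = m ∧
      B = s.biUnion fun i => {2 * i - 1, 2 * i}


section Statement8Aux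

/-- The pair `{2c-1, 2c}`. -/
def spair (c : ℕ) : Finset ℕ := {2 * c - 1, 2 * c}

lemma mem_spair {x c : ℕ} : x ∈ spair c ↔ x = 2 * c - 1 ∨ x = 2 * c := by
  simp [spair]

lemma mem_biUnion_spair {x : ℕ} {s : Finset ℕ} :
    x ∈ s.biUnion spair ↔ ∃ c ∈ s, x = 2 * c - 1 ∨ x = 2 * c := by
  simp [spair]

/-- Blocks built from pairs have balanced odd/even counts. -/
lemma spair_balanced (u : Finset ℕ) (hu : ∀ c ∈ u, 1 ≤ c) :
    ((u.biUnion spair).filter (fun x => Odd x)).card = u.card ∧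
    ((u.biUnion spair).filter (fun x => Even x)).card = u.card ∧
    (u.biUnion spair).card = 2 * u.card := by
  have hodd : (u.biUnion spair).filter (fun x => Odd x) = u.image (fun c => 2 * c - 1) := by
    ext x
    simp only [Finset.mem_filter, mem_biUnion_spair, Finset.mem_image, Nat.odd_iff]
    constructor
    · rintro ⟨⟨c, hc, h⟩, hx⟩
      exact ⟨c, hc, by have := hu c hc; omega⟩
    · rintro ⟨c, hc, rfl⟩
      have := hu c hc
      exact ⟨⟨c, hc, Or.inl rfl⟩, by omega⟩
  have heven : (u.biUnion spair).filter (fun x => Even x) = u.image (fun c => 2 * c) := by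
    ext x
    simp only [Finset.mem_filter, mem_biUnion_spair, Finset.mem_image, Nat.even_iff]
    constructor
    · rintro ⟨⟨c, hc, h⟩, hx⟩
      exact ⟨c, hc, by have := hu c hc; omega⟩
    · rintro ⟨c, hc, rfl⟩
      exact ⟨⟨c, hc, Or.inr rfl⟩, by omega⟩
  have h1 : (u.image (fun c => 2 * c - 1)).card = u.card :=
    Finset.card_image_of_injOn (fun a ha b hb h => by
      have := hu a ha; have := hu b hb; omega)
  have h2 : (u.image (fun c => 2 * c)).card = u.card :=
    Finset.card_image_of_injOn (fun a _ b _ h => by omega)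
  refine ⟨by rw [hodd, h1], by rw [heven, h2], ?_⟩
  have := Finset.card_filter_add_card_filter_not (s := u.biUnion spair)
      (p := fun x => Odd x)
  simp only [Nat.not_odd_iff_even] at this
  rw [hodd, heven, h1, h2] at this
  omega

lemma spair_elem_eq {x c d : ℕ} (hc : 1 ≤ c) (hd : 1 ≤ d)
    (h1 : x ∈ spair c) (h2 : x ∈ spair d) : c = d := by
  rw [mem_spair] at h1 h2; omega

/-- Recovering the index set from the block. -/
lemma mem_idx_iff {s : Finset ℕ} (hs : ∀ c ∈ s, 1 ≤ c) {c : ℕ} :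
    c ∈ s ↔ 2 * c ∈ s.biUnion spair := by
  rw [mem_biUnion_spair]
  constructor
  · exact fun h => ⟨c, h, Or.inr rfl⟩
  · rintro ⟨d, hd, h⟩
    have := hs d hd
    have : c = d := by omega
    exact this ▸ hd

variable (m t : ℕ)

/-- The index set of the row `k` of a bijection `f`. -/
def rowIdx (f : Fin t × Fin m ≃ {x // x ∈ Finset.Icc 1 (m * t)}) (k : Fin t) : Finset ℕ :=
  Finset.univ.image fun r : Fin m => ((f (k, r)) : ℕ)

/-- The block associated to row `k`. -/
def blockOf (f : Fin t × Fin m ≃ {x // x ∈ Finset.Icc 1 (m * t)}) (k : Fin t) : Finset ℕ :=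
  (rowIdx m t f k).biUnion spair

variable {m t}

lemma mem_rowIdx {f : Fin t × Fin m ≃ {x // x ∈ Finset.Icc 1 (m * t)}} {k : Fin t} {c : ℕ} :
    c ∈ rowIdx m t f k ↔ ∃ r : Fin m, ((f (k, r)) : ℕ) = c := by
  simp [rowIdx]

lemma rowIdx_subset {f : Fin t × Fin m ≃ {x // x ∈ Finset.Icc 1 (m * t)}} {k : Fin t} :
    rowIdx m t f k ⊆ Finset.Icc 1 (m * t) := by
  intro c hc
  obtain ⟨r, rfl⟩ := mem_rowIdx.1 hc
  exact (f (k, r)).2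

lemma rowIdx_card {f : Fin t × Fin m ≃ {x // x ∈ Finset.Icc 1 (m * t)}} {k : Fin t} :
    (rowIdx m t f k).card = m := by
  rw [rowIdx, Finset.card_image_of_injective _ (fun r r' h => by
    have : (k, r) = (k, r') := f.injective (Subtype.ext h)
    exact (Prod.ext_iff.1 this).2)]
  simp

lemma blockOf_elim {f : Fin t × Fin m ≃ {x // x ∈ Finset.Icc 1 (m * t)}} {k k' : Fin t}
    {x : ℕ} (h : x ∈ blockOf m t f k) (h' : x ∈ blockOf m t f k') : k = k' := by
  obtain ⟨c, hc, hx⟩ := Finset.mem_biUnion.1 h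
  obtain ⟨c', hc', hx'⟩ := Finset.mem_biUnion.1 h'
  have h1 : 1 ≤ c := (Finset.mem_Icc.1 (rowIdx_subset hc)).1
  have h1' : 1 ≤ c' := (Finset.mem_Icc.1 (rowIdx_subset hc')).1
  have hcc : c = c' := spair_elem_eq h1 h1' hx hx'
  subst hcc
  obtain ⟨r, hr⟩ := mem_rowIdx.1 hc
  obtain ⟨r', hr'⟩ := mem_rowIdx.1 hc'
  have : (k, r) = (k', r') := f.injective (Subtype.ext (hr.trans hr'.symm))
  exact congrArg Prod.fst this

lemma blockOf_nonempty (hm : 1 ≤ m) {f : Fin t × Fin m ≃ {x // x ∈ Finset.Icc 1 (m * t)}}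
    {k : Fin t} : (blockOf m t f k).Nonempty := by
  refine ⟨2 * ((f (k, ⟨0, hm⟩)) : ℕ), ?_⟩
  rw [blockOf, mem_biUnion_spair]
  exact ⟨_, mem_rowIdx.2 ⟨⟨0, hm⟩, rfl⟩, Or.inr rfl⟩

lemma blockOf_injective (hm : 1 ≤ m) {f : Fin t × Fin m ≃ {x // x ∈ Finset.Icc 1 (m * t)}} :
    Function.Injective (blockOf m t f) := by
  intro k k' h
  obtain ⟨x, hx⟩ := blockOf_nonempty (f := f) (k := k) hm
  exact blockOf_elim hx (h ▸ hx)

variable (m t)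

/-- The pair-block partition associated to a bijection. -/
def Phi (hm : 1 ≤ m) (f : Fin t × Fin m ≃ {x // x ∈ Finset.Icc 1 (m * t)}) :
    Finpartition (Finset.Icc 1 (2 * (m * t))) where
  parts := Finset.univ.image (blockOf m t f)
  supIndep := by
    rw [Finset.supIndep_iff_pairwiseDisjoint]
    intro B hB B' hB' hne
    obtain ⟨k, _, rfl⟩ := Finset.mem_image.1 hB
    obtain ⟨k', _, rfl⟩ := Finset.mem_image.1 hB'
    rw [Function.onFun, id, id, Finset.disjoint_left]
    intro x hx hx'
    exact hne (by rw [blockOf_elim hx hx'])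
  sup_parts := by
    ext x
    rw [Finset.mem_sup]
    constructor
    · rintro ⟨B, hB, hx⟩
      obtain ⟨k, _, rfl⟩ := Finset.mem_image.1 hB
      obtain ⟨c, hc, hx⟩ := mem_biUnion_spair.1 hx
      have := Finset.mem_Icc.1 (rowIdx_subset hc)
      rw [Finset.mem_Icc]
      omega
    · intro hx
      have hx' := Finset.mem_Icc.1 hx
      have hcI : (x + 1) / 2 ∈ Finset.Icc 1 (m * t) := Finset.mem_Icc.2 (by omega)
      obtain ⟨⟨k, r⟩, hf⟩ := f.surjective ⟨(x + 1) / 2, hcI⟩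
      refine ⟨blockOf m t f k, Finset.mem_image_of_mem _ (Finset.mem_univ k), ?_⟩
      show x ∈ blockOf m t f k
      rw [blockOf, mem_biUnion_spair]
      refine ⟨(x + 1) / 2, mem_rowIdx.2 ⟨r, by rw [hf]⟩, by omega⟩
  bot_notMem := by
    intro h
    obtain ⟨k, _, hk⟩ := Finset.mem_image.1 h
    by_cases hm : 1 ≤ m
    · exact (blockOf_nonempty hm).ne_empty hk
    · exact absurd ((f.symm ⟨m * t, by simp; nlinarith⟩).2.2) (by omega)

lemma Phi_pbp (hm : 1 ≤ m) (f : Fin t × Fin m ≃ {x // x ∈ Finset.Icc 1 (m * t)}) :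
    PairBlockPartition m t (Phi m t hm f) := by
  constructor
  · show (Finset.univ.image (blockOf m t f)).card = t
    rw [Finset.card_image_of_injective _ (blockOf_injective hm)]
    simp
  · intro B hB
    obtain ⟨k, _, rfl⟩ := Finset.mem_image.1 hB
    exact ⟨rowIdx m t f k, rowIdx_subset, rowIdx_card, rfl⟩

/-- The index set of a block of a pair-block partition. -/
def idxOf (B : Finset ℕ) : Finset ℕ :=
  (Finset.Icc 1 (m * t)).filter fun c => 2 * c ∈ B

variable {m t}

lemma idxOf_spec {ω : Finpartition (Finset.Icc 1 (2 * (m * t)))}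
    (hω : PairBlockPartition m t ω) {B : Finset ℕ} (hB : B ∈ ω.parts) :
    idxOf m t B ⊆ Finset.Icc 1 (m * t) ∧ (idxOf m t B).card = m ∧
      B = (idxOf m t B).biUnion spair := by
  obtain ⟨s, hsI, hscard, hsB⟩ := hω.2 B hB
  have hs1 : ∀ c ∈ s, 1 ≤ c := fun c hc => (Finset.mem_Icc.1 (hsI hc)).1
  have key : idxOf m t B = s := by
    ext c
    rw [idxOf, Finset.mem_filter]
    constructor
    · rintro ⟨_, h2⟩
      exact (mem_idx_iff hs1).2 (hsB ▸ h2)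
    · intro hc
      exact ⟨hsI hc, hsB ▸ (mem_idx_iff hs1).1 hc⟩
  rw [key]
  exact ⟨hsI, hscard, hsB⟩

lemma idxOf_disj {ω : Finpartition (Finset.Icc 1 (2 * (m * t)))}
    (hω : PairBlockPartition m t ω) {B B' : Finset ℕ} (hB : B ∈ ω.parts)
    (hB' : B' ∈ ω.parts) (hne : B ≠ B') {c : ℕ} (h : c ∈ idxOf m t B)
    (h' : c ∈ idxOf m t B') : False := by
  have hd := ω.supIndep.pairwiseDisjoint hB hB' hne
  rw [Function.onFun, id, id, Finset.disjoint_left] at hd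
  exact hd (Finset.mem_filter.1 h).2 (Finset.mem_filter.1 h').2


lemma fiber_card {m t : ℕ} (hm : 1 ≤ m) (ht : 1 ≤ t)
    {ω : Finpartition (Finset.Icc 1 (2 * (m * t)))} (hω : PairBlockPartition m t ω) :
    Nat.card {f : Fin t × Fin m ≃ {x // x ∈ Finset.Icc 1 (m * t)} // Phi m t hm f = ω} =
      t.factorial * m.factorial ^ t := by
  classical
  -- the canonical equiv from `Fin m` to the index set of a block
  let E : (B : {B : Finset ℕ // B ∈ ω.parts}) → (Fin m ≃ {x // x ∈ idxOf m t B.1}) :=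
    fun B => ((idxOf m t B.1).orderIsoOfFin (idxOf_spec hω B.2).2.1).toEquiv
  -- the raw map associated to `(π, p)`
  let q : (Fin t ≃ {B : Finset ℕ // B ∈ ω.parts}) → (Fin t → Equiv.Perm (Fin m)) →
      Fin t × Fin m → {x // x ∈ Finset.Icc 1 (m * t)} :=
    fun π p kr => ⟨(E (π kr.1) (p kr.1 kr.2) : ℕ),
      (idxOf_spec hω (π kr.1).2).1 (E (π kr.1) (p kr.1 kr.2)).2⟩
  have hqinj : ∀ π p, Function.Injective (q π p) := by
    rintro π p ⟨k, r⟩ ⟨k', r'⟩ h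
    have hval : (E (π k) (p k r) : ℕ) = (E (π k') (p k' r') : ℕ) :=
      congrArg Subtype.val h
    have hkk : π k = π k' := by
      by_contra hne
      have hne' : (π k).1 ≠ (π k').1 := fun h' => hne (Subtype.ext h')
      exact idxOf_disj hω (π k).2 (π k').2 hne'
        (E (π k) (p k r)).2 (hval ▸ (E (π k') (p k' r')).2)
    have hk : k = k' := π.injective hkk
    subst hk
    have : E (π k) (p k r) = E (π k) (p k r') := Subtype.ext hval
    have := (p k).injective ((E (π k)).injective this)
    rw [this]
  have hcard : Fintype.card (Fin t × Fin m) =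
      Fintype.card ↥(Finset.Icc 1 (m * t)) := by
    rw [Fintype.card_prod, Fintype.card_fin, Fintype.card_fin, Fintype.card_coe,
      Nat.card_Icc, Nat.mul_comm t m]
    omega
  have hqbij : ∀ π p, Function.Bijective (q π p) := fun π p =>
    (Fintype.bijective_iff_injective_and_card _).2 ⟨hqinj π p, hcard⟩
  -- the map from the data to the fiber
  have hPhi : ∀ π p, Phi m t hm (Equiv.ofBijective (q π p) (hqbij π p)) = ω := by
    intro π p
    have hblock : ∀ k, blockOf m t (Equiv.ofBijective (q π p) (hqbij π p)) k = (π k).1 := by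
      intro k
      have hrow : rowIdx m t (Equiv.ofBijective (q π p) (hqbij π p)) k =
          idxOf m t (π k).1 := by
        ext c
        rw [mem_rowIdx]
        constructor
        · rintro ⟨r, rfl⟩
          exact (E (π k) (p k r)).2
        · intro hc
          refine ⟨(p k).symm ((E (π k)).symm ⟨c, hc⟩), ?_⟩
          show (E (π k) (p k ((p k).symm ((E (π k)).symm ⟨c, hc⟩))) : ℕ) = c
          rw [Equiv.apply_symm_apply, Equiv.apply_symm_apply]
      rw [blockOf, hrow]
      exact ((idxOf_spec hω (π k).2).2.2).symm
    apply Finpartition.ext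
    show Finset.univ.image (blockOf m t (Equiv.ofBijective (q π p) (hqbij π p))) = ω.parts
    apply Finset.eq_of_subset_of_card_le
    · intro B hB
      obtain ⟨k, _, rfl⟩ := Finset.mem_image.1 hB
      rw [hblock]
      exact (π k).2
    · rw [Finset.card_image_of_injective _ (blockOf_injective hm), hω.1]
      simp
  let Ψ : (Fin t ≃ {B : Finset ℕ // B ∈ ω.parts}) × (Fin t → Equiv.Perm (Fin m)) →
      {f : Fin t × Fin m ≃ {x // x ∈ Finset.Icc 1 (m * t)} // Phi m t hm f = ω} :=
    fun πp => ⟨Equiv.ofBijective (q πp.1 πp.2) (hqbij πp.1 πp.2), hPhi πp.1 πp.2⟩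
  have hΨbij : Function.Bijective Ψ := by
    constructor
    · rintro ⟨π, p⟩ ⟨π', p'⟩ h
      have hq : ∀ kr, q π p kr = q π' p' kr := by
        intro kr
        have := congrArg (fun e => (e.1 : Fin t × Fin m → _) kr) h
        exact this
      have hval : ∀ k r, (E (π k) (p k r) : ℕ) = (E (π' k) (p' k r) : ℕ) :=
        fun k r => congrArg Subtype.val (hq (k, r))
      have hππ : π = π' := by
        apply Equiv.ext
        intro k
        by_contra hne
        have hne' : (π k).1 ≠ (π' k).1 := fun h' => hne (Subtype.ext h')
        exact idxOf_disj hω (π k).2 (π' k).2 hne'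
          (E (π k) (p k ⟨0, hm⟩)).2 ((hval k ⟨0, hm⟩) ▸ (E (π' k) (p' k ⟨0, hm⟩)).2)
      subst hππ
      have hpp : p = p' := by
        funext k
        apply Equiv.ext
        intro r
        exact (E (π k)).injective (Subtype.ext (hval k r))
      rw [hpp]
    · rintro ⟨g, hg⟩
      -- the block map
      let π₀ : Fin t → {B : Finset ℕ // B ∈ ω.parts} := fun k =>
        ⟨blockOf m t g k, by rw [← hg]; exact Finset.mem_image_of_mem _ (Finset.mem_univ k)⟩
      have hπ₀inj : Function.Injective π₀ := fun k k' h =>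
        blockOf_injective hm (congrArg Subtype.val h)
      have hπ₀bij : Function.Bijective π₀ :=
        (Fintype.bijective_iff_injective_and_card _).2 ⟨hπ₀inj, by
          rw [Fintype.card_coe, hω.1]; simp⟩
      let π := Equiv.ofBijective π₀ hπ₀bij
      let ρ : (k : Fin t) → Fin m → {x // x ∈ idxOf m t (blockOf m t g k)} := fun k r =>
        ⟨(g (k, r) : ℕ), by
          rw [idxOf, Finset.mem_filter]
          refine ⟨(g (k, r)).2, ?_⟩
          rw [blockOf, mem_biUnion_spair]
          exact ⟨(g (k, r) : ℕ), mem_rowIdx.2 ⟨r, rfl⟩, Or.inr rfl⟩⟩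
      have hρinj : ∀ k, Function.Injective (ρ k) := by
        intro k r r' h
        have hvv : (g (k, r) : ℕ) = (g (k, r') : ℕ) :=
          congrArg (fun z : {x // x ∈ idxOf m t (blockOf m t g k)} => (z : ℕ)) h
        have := g.injective (Subtype.ext hvv)
        exact (Prod.ext_iff.1 this).2
      have hρbij : ∀ k, Function.Bijective (ρ k) := fun k =>
        (Fintype.bijective_iff_injective_and_card _).2 ⟨hρinj k, by
          rw [Fintype.card_coe, (idxOf_spec hω (π₀ k).2).2.1]; simp⟩
      let p : Fin t → Equiv.Perm (Fin m) := fun k =>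
        (Equiv.ofBijective (ρ k) (hρbij k)).trans (E (π k)).symm
      refine ⟨(π, p), ?_⟩
      apply Subtype.ext
      apply Equiv.ext
      rintro ⟨k, r⟩
      apply Subtype.ext
      show (E (π k) (p k r) : ℕ) = (g (k, r) : ℕ)
      show (E (π k) ((E (π k)).symm (ρ k r)) : ℕ) = (g (k, r) : ℕ)
      exact congrArg Subtype.val ((E (π k)).apply_symm_apply (ρ k r))
  rw [← Nat.card_eq_of_bijective Ψ hΨbij, Nat.card_prod, Nat.card_fun]
  have h1 : Nat.card (Fin t ≃ {B : Finset ℕ // B ∈ ω.parts}) = t.factorial := by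
    rw [Nat.card_eq_fintype_card,
      Fintype.card_equiv (Fintype.equivOfCardEq (by rw [Fintype.card_coe, hω.1]; simp))]
    simp
  have h2 : Nat.card (Equiv.Perm (Fin m)) = m.factorial := by
    rw [Nat.card_eq_fintype_card, Fintype.card_perm]
    simp
  rw [h1, h2, Nat.card_eq_fintype_card, Fintype.card_fin]

end Statement8Aux

/-- For all `m, t ≥ 1`, the number of set partitions of `{1,…,2mt}` into
exactly `t` blocks, each block a union of exactly `m` consecutive pairs `{2i−1,2i}`,
equals `(mt)!/(t!·(m!)^t)`; moreover every such partition is special symmetric and has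
`r(ω) = 0` (exactly one even generating vertex). -/
theorem statement8 (m t : ℕ) (hm : 1 ≤ m) (ht : 1 ≤ t) :
    (Set.ncard {ω : Finpartition (Finset.Icc 1 (2 * (m * t))) | PairBlockPartition m t ω})
        * (t.factorial * m.factorial ^ t) = (m * t).factorial ∧
    ∀ ω : Finpartition (Finset.Icc 1 (2 * (m * t))), PairBlockPartition m t ω →
      SpecialSymmetric ω ∧ ω.parts.card = t ∧ rIdx ω = 0 := by
  classical
  constructor
  · -- the counting statement
    have h0 : {ω : Finpartition (Finset.Icc 1 (2 * (m * t))) |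
        PairBlockPartition m t ω}.ncard =
        (Finset.univ.filter fun ω : Finpartition (Finset.Icc 1 (2 * (m * t))) =>
          PairBlockPartition m t ω).card := by
      rw [Set.ncard_eq_toFinset_card']
      congr 1
      ext ω
      simp
    have h1 : (Finset.univ : Finset (Fin t × Fin m ≃ ↥(Finset.Icc 1 (m * t)))).card =
        ∑ ω ∈ (Finset.univ.filter fun ω : Finpartition (Finset.Icc 1 (2 * (m * t))) =>
            PairBlockPartition m t ω),
          (Finset.univ.filter fun f => Phi m t hm f = ω).card :=
      Finset.card_eq_sum_card_fiberwise fun f _ =>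
        Finset.mem_filter.2 ⟨Finset.mem_univ _, Phi_pbp m t hm f⟩
    have h2 : ∀ ω ∈ (Finset.univ.filter fun ω :
          Finpartition (Finset.Icc 1 (2 * (m * t))) => PairBlockPartition m t ω),
        (Finset.univ.filter fun f => Phi m t hm f = ω).card =
          t.factorial * m.factorial ^ t := by
      intro ω hω
      have hpω : PairBlockPartition m t ω := (Finset.mem_filter.1 hω).2
      rw [← Fintype.card_subtype, ← Nat.card_eq_fintype_card]
      exact fiber_card hm ht hpω
    have h3 : (Finset.univ : Finset (Fin t × Fin m ≃ ↥(Finset.Icc 1 (m * t)))).card =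
        (m * t).factorial := by
      rw [Finset.card_univ, Fintype.card_equiv (Fintype.equivOfCardEq (by
        rw [Fintype.card_prod, Fintype.card_fin, Fintype.card_fin, Fintype.card_coe,
          Nat.card_Icc, Nat.mul_comm t m]
        omega))]
      rw [Fintype.card_prod, Fintype.card_fin, Fintype.card_fin, Nat.mul_comm t m]
    rw [h0, ← h3, h1, Finset.sum_congr rfl h2, Finset.sum_const, smul_eq_mul]
  · -- every pair-block partition is special symmetric with r = 0
    intro ω hω
    have hblock : ∀ B ∈ ω.parts, ∃ s : Finset ℕ, (∀ c ∈ s, 1 ≤ c) ∧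
        B = s.biUnion spair := by
      intro B hB
      obtain ⟨s, hsI, _, hsB⟩ := hω.2 B hB
      exact ⟨s, fun c hc => (Finset.mem_Icc.1 (hsI hc)).1, hsB⟩
    refine ⟨⟨?_, ?_⟩, hω.1, ?_⟩
    · -- even block sizes
      intro B hB
      obtain ⟨s, hs1, rfl⟩ := hblock B hB
      rw [(spair_balanced s hs1).2.2]
      exact even_two_mul _
    · -- the gap condition
      intro B hB i hi j hj hij hgap B' hB' hne
      obtain ⟨s, hs1, hsB⟩ := hblock B hB
      obtain ⟨s', hs1', hsB'⟩ := hblock B' hB'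
      rw [hsB] at hi hj
      obtain ⟨a, ha, hia⟩ := mem_biUnion_spair.1 hi
      obtain ⟨b, hb, hjb⟩ := mem_biUnion_spair.1 hj
      have ha1 := hs1 a ha
      have hb1 := hs1 b hb
      rcases hia with hia | hia
      · -- i = 2a - 1, so j = 2a and the gap is empty
        have h2a : 2 * a ∈ B := hsB ▸ mem_biUnion_spair.2 ⟨a, ha, Or.inr rfl⟩
        have hj2a : j = 2 * a := by
          have := hgap (2 * a) h2a
          omega
        have hempty : B' ∩ Finset.Ioo i j = ∅ := by
          ext x
          simp only [Finset.mem_inter, Finset.mem_Ioo, Finset.notMem_empty, iff_false,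
            not_and]
          intro _
          omega
        rw [hempty]
        simp
      · -- i = 2a, so j = 2b - 1
        have hjodd : j = 2 * b - 1 := by
          rcases hjb with hjb | hjb
          · exact hjb
          · exfalso
            have h2b : 2 * b - 1 ∈ B := hsB ▸ mem_biUnion_spair.2 ⟨b, hb, Or.inl rfl⟩
            have := hgap (2 * b - 1) h2b
            omega
        have hinter : B' ∩ Finset.Ioo i j =
            (s'.filter fun c => a < c ∧ c < b).biUnion spair := by
          ext x
          rw [Finset.mem_inter, hsB', mem_biUnion_spair, mem_biUnion_spair,
            Finset.mem_Ioo]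
          constructor
          · rintro ⟨⟨c, hc, hx⟩, hlt⟩
            have := hs1' c hc
            exact ⟨c, Finset.mem_filter.2 ⟨hc, by omega⟩, hx⟩
          · rintro ⟨c, hc, hx⟩
            obtain ⟨hc, hab⟩ := Finset.mem_filter.1 hc
            have := hs1' c hc
            exact ⟨⟨c, hc, hx⟩, by omega⟩
        rw [hinter]
        obtain ⟨ho, he, hc⟩ := spair_balanced (s'.filter fun c => a < c ∧ c < b)
          (fun c hc => hs1' c (Finset.filter_subset _ _ hc))
        refine ⟨by rw [hc]; exact even_two_mul _, by rw [ho, he]⟩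
    · -- r(ω) = 0
      rw [rIdx, Finset.card_eq_zero, Finset.filter_eq_empty_iff]
      intro B hB hEven
      have hne : B.Nonempty := ω.nonempty_of_mem_parts hB
      have hmin : B.min = ((B.min' hne : ℕ) : WithBot ℕ) := (Finset.coe_min' hne).symm
      rw [hmin] at hEven
      have hEven : Even (B.min' hne) := hEven
      obtain ⟨s, hs1, hsB⟩ := hblock B hB
      have hvB : B.min' hne ∈ B := Finset.min'_mem B hne
      have hvB' : B.min' hne ∈ s.biUnion spair := by rw [← hsB]; exact hvB
      obtain ⟨c, hc, hv⟩ := mem_biUnion_spair.1 hvB'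
      have hc1 := hs1 c hc
      rw [Nat.even_iff] at hEven
      rcases hv with hv | hv
      · omega
      · have h2c1 : 2 * c - 1 ∈ B := hsB ▸ mem_biUnion_spair.2 ⟨c, hc, Or.inl rfl⟩
        have := Finset.min'_le B _ h2c1
        omega

end RMT
end
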